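/- Let K be a field, E an n-dimensional K-vector space with basis, R a quadratic K-algebra with n generators and d relations f_s = Σ c_{s,a,b} x_a x_b, and M the d-dimensional subspace of E⊗E spanned by the corresponding tensors Σ c_{s,a,b} e_a⊗e_b. Then for every q ≥ 2, dim R_q = dim E_q(M^⊥, E), where M^⊥ is the orthogonal complement with respect to the monomial-orthonormal form on E⊗E and E_q(L,E) = ∩_{j=1}^{q-1} E^{⊗(j-1)} ⊗ L ⊗ E^{⊗(q-1-j)}. -/

import Mathlib

open TensorProduct

namespace GS

variable (K : Type*) [Field K] (V : Type*) [AddCommGroup V] [Module K V]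

/-- The tensor product of two subspaces, as a subspace of the tensor product. -/
noncomputable def tsub {M N : Type*} [AddCommGroup M] [Module K M] [AddCommGroup N] [Module K N]
    (A : Submodule K M) (B : Submodule K N) : Submodule K (M ⊗[K] N) :=
  LinearMap.range (TensorProduct.map A.subtype B.subtype)

/-- `V ≃ V^{⊗1}`. -/
noncomputable def pow1 : V ≃ₗ[K] ⨂[K]^1 V :=
  (PiTensorProduct.subsingletonEquiv (s := fun _ => V) (0 : Fin 1)).symm

/-- `V ⊗ V ≃ V^{⊗2}`. -/
noncomputable def pow2 : (V ⊗[K] V) ≃ₗ[K] ⨂[K]^2 V :=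
  (TensorProduct.congr (pow1 K V) (pow1 K V)).trans
    ((TensorPower.mulEquiv (n := 1) (m := 1)).trans (TensorPower.cast K V (by norm_num)))

/-- The subspace `V^{⊗a} ⊗ L ⊗ V^{⊗b}` of `V^{⊗(a+(2+b))}`. -/
noncomputable def segAux (a b : ℕ) (L : Submodule K (V ⊗[K] V)) :
    Submodule K (⨂[K]^(a + (2 + b)) V) :=
  Submodule.map (TensorPower.mulEquiv (n := a) (m := 2 + b)).toLinearMap
    (tsub K (⊤ : Submodule K (⨂[K]^a V))
      (Submodule.map (TensorPower.mulEquiv (n := 2) (m := b)).toLinearMap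
        (tsub K (L.map (pow2 K V : (V ⊗[K] V) →ₗ[K] ⨂[K]^2 V)) (⊤ : Submodule K (⨂[K]^b V)))))

/-- For `j : Fin (q-1)`, the subspace `V^{⊗j} ⊗ L ⊗ V^{⊗(q-2-j)}` of `V^{⊗q}`
(the `(j+1)`-st shift of `L`). -/
noncomputable def shiftSub (q : ℕ) (L : Submodule K (V ⊗[K] V)) (j : Fin (q - 1)) :
    Submodule K (⨂[K]^q V) :=
  Submodule.map (TensorPower.cast K V (by have := j.2; omega : (j : ℕ) + (2 + (q - 2 - j)) = q)).toLinearMap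
    (segAux K V j (q - 2 - j) L)

/-- `E_q(L,V) = ⋂_{j=1}^{q-1} V^{⊗(j-1)} ⊗ L ⊗ V^{⊗(q-1-j)} ⊆ V^{⊗q}`. -/
noncomputable def Eint (q : ℕ) (L : Submodule K (V ⊗[K] V)) : Submodule K (⨂[K]^q V) :=
  ⨅ j : Fin (q - 1), shiftSub K V q L j

/-- The degree-`q` component of the two-sided ideal generated by the subspace
`M ⊆ V ⊗ V` of quadratic relations: the sum of all shifts `V^{⊗(j-1)} ⊗ M ⊗ V^{⊗(q-1-j)}`. -/
noncomputable def idealComp (q : ℕ) (M : Submodule K (V ⊗[K] V)) : Submodule K (⨂[K]^q V) :=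
  ⨆ j : Fin (q - 1), shiftSub K V q M j

/-- The dimension of the degree-`q` component of the quadratic algebra with space of
relations `M ⊆ V ⊗ V` (the quotient of `V^{⊗q}` by the degree-`q` component of the ideal). -/
noncomputable def quadDim (q : ℕ) (M : Submodule K (V ⊗[K] V)) : ℕ :=
  Module.finrank K ((⨂[K]^q V) ⧸ idealComp K V q M)

/-- `h_q(K,n,d)`: the minimal dimension of the `q`-th graded component over all quadratic
`K`-algebras with `n` generators and `d` (linearly independent) quadratic relations. -/
noncomputable def hq (n d q : ℕ) : ℕ :=
  sInf { h | ∃ M : Submodule K ((Fin n → K) ⊗[K] (Fin n → K)),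
      Module.finrank K M = d ∧ quadDim K (Fin n → K) q M = h }

end GS

namespace GS

variable (K : Type*) [Field K]

/-- The coordinate functional on `E ⊗ E` (with `E = K^n`) sending `e_a ⊗ e_b` to `1`
and all other basis tensors to `0`. -/
noncomputable def coord2 (n : ℕ) (a b : Fin n) : ((Fin n → K) ⊗[K] (Fin n → K)) →ₗ[K] K :=
  TensorProduct.lift ((LinearMap.proj a : (Fin n → K) →ₗ[K] K).smulRight
    (LinearMap.proj b : (Fin n → K) →ₗ[K] K))

/-- The symmetric bilinear form on `E ⊗ E` making the basis tensors `e_a ⊗ e_b`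
orthonormal, curried in its first argument. -/
noncomputable def form2 (n : ℕ) (x : (Fin n → K) ⊗[K] (Fin n → K)) :
    ((Fin n → K) ⊗[K] (Fin n → K)) →ₗ[K] K :=
  ∑ p : Fin n × Fin n, coord2 K n p.1 p.2 x • coord2 K n p.1 p.2

/-- Orthogonal complement in `E ⊗ E` with respect to the monomial-orthonormal form. -/
noncomputable def perp2 (n : ℕ) (M : Submodule K ((Fin n → K) ⊗[K] (Fin n → K))) :
    Submodule K ((Fin n → K) ⊗[K] (Fin n → K)) :=
  ⨅ η ∈ M, LinearMap.ker (form2 K n η)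

end GS
/-!
Choose a nondegenerate pairing `Φ` on `V` (for `V = K^n`, the one making the standard basis
orthonormal) and extend it multiplicatively to every tensor power `V^{⊗q}`. Under this pairing the
orthogonal complement of a sum of subspaces is the intersection of their complements, and the
orthogonal complement of `V^{⊗a} ⊗ L ⊗ V^{⊗b}` is `V^{⊗a} ⊗ L^⊥ ⊗ V^{⊗b}` (for `L ⊗ V^{⊗b}` the
complement visibly contains `L^⊥ ⊗ V^{⊗b}`, and the dimensions agree). Hence the orthogonal
complement of the degree-`q` component of the ideal is `E_q(M^⊥, V)`, and its dimension is the
codimension of that component, which is `dim R_q`.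
-/

namespace GS

open Module

section Perp

variable {K : Type*} [Field K] {W W' : Type*} [AddCommGroup W] [Module K W]
  [AddCommGroup W'] [Module K W']

noncomputable def perp (Φ : W ≃ₗ[K] Dual K W) (S : Submodule K W) : Submodule K W :=
  S.dualAnnihilator.comap (Φ : W →ₗ[K] Dual K W)

lemma mem_perp (Φ : W ≃ₗ[K] Dual K W) (S : Submodule K W) (x : W) :
    x ∈ perp Φ S ↔ ∀ s ∈ S, Φ x s = 0 := by
  simp [perp, Submodule.mem_dualAnnihilator]

lemma perp_iSup {ι : Sort*} (Φ : W ≃ₗ[K] Dual K W) (S : ι → Submodule K W) :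
    perp Φ (⨆ i, S i) = ⨅ i, perp Φ (S i) := by
  simp [perp, Submodule.dualAnnihilator_iSup_eq, Submodule.comap_iInf]

lemma finrank_quotient_eq_finrank_perp [FiniteDimensional K W] (Φ : W ≃ₗ[K] Dual K W)
    (S : Submodule K W) : finrank K (W ⧸ S) = finrank K (perp Φ S) := by
  rw [perp, Submodule.comap_equiv_eq_map_symm, LinearEquiv.finrank_map_eq]
  exact (Subspace.quotEquivAnnihilator S).finrank_eq

lemma finrank_perp_add_finrank [FiniteDimensional K W] (Φ : W ≃ₗ[K] Dual K W)
    (S : Submodule K W) : finrank K (perp Φ S) + finrank K S = finrank K W := by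
  rw [← finrank_quotient_eq_finrank_perp, Submodule.finrank_quotient_add_finrank]

lemma eq_perp_of_le_of_finrank_add_finrank [FiniteDimensional K W] {Φ : W ≃ₗ[K] Dual K W}
    {S T : Submodule K W} (hle : T ≤ perp Φ S) (h : finrank K T + finrank K S = finrank K W) :
    T = perp Φ S :=
  Submodule.eq_of_le_of_finrank_le hle (by have := finrank_perp_add_finrank Φ S; omega)

lemma perp_map (Φ : W ≃ₗ[K] Dual K W) (Φ' : W' ≃ₗ[K] Dual K W') (e : W ≃ₗ[K] W')
    (he : ∀ x y, Φ' (e x) (e y) = Φ x y) (S : Submodule K W) :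
    perp Φ' (S.map e.toLinearMap) = (perp Φ S).map e.toLinearMap := by
  ext y
  obtain ⟨x, rfl⟩ := e.surjective y
  simp [mem_perp, Submodule.mem_map, he, -Submodule.mem_map_equiv]

end Perp

section TensorProduct

variable {K : Type*} [Field K] {X Y : Type*} [AddCommGroup X] [Module K X]
  [AddCommGroup Y] [Module K Y] [FiniteDimensional K X] [FiniteDimensional K Y]

lemma finrank_tsub (A : Submodule K X) (B : Submodule K Y) :
    finrank K (tsub K A B) = finrank K A * finrank K B := by
  rw [tsub, LinearMap.finrank_range_of_inj (TensorProduct.map_injective_of_flat_flat _ _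
    A.injective_subtype B.injective_subtype), finrank_tensorProduct]

noncomputable def tensorPairing (ΦX : X ≃ₗ[K] Dual K X) (ΦY : Y ≃ₗ[K] Dual K Y) :
    (X ⊗[K] Y) ≃ₗ[K] Dual K (X ⊗[K] Y) :=
  (TensorProduct.congr ΦX ΦY).trans (TensorProduct.dualDistribEquiv K X Y)

@[simp]
lemma tensorPairing_tmul (ΦX : X ≃ₗ[K] Dual K X) (ΦY : Y ≃ₗ[K] Dual K Y) (u s : X) (v t : Y) :
    tensorPairing ΦX ΦY (u ⊗ₜ v) (s ⊗ₜ t) = ΦX u s * ΦY v t := by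
  simp [tensorPairing, TensorProduct.dualDistribEquiv, TensorProduct.dualDistribEquivOfBasis,
    TensorProduct.dualDistrib_apply]

variable (ΦX : X ≃ₗ[K] Dual K X) (ΦY : Y ≃ₗ[K] Dual K Y)

lemma tsub_le_perp_tsub {A A' : Submodule K X} {B B' : Submodule K Y}
    (h : ∀ a' ∈ A', ∀ a ∈ A, ∀ b' ∈ B', ∀ b ∈ B, ΦX a' a * ΦY b' b = 0) :
    tsub K A' B' ≤ perp (tensorPairing ΦX ΦY) (tsub K A B) := by
  have hzero : (tensorPairing ΦX ΦY).toLinearMap.compl₁₂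
      (TensorProduct.map A'.subtype B'.subtype) (TensorProduct.map A.subtype B.subtype) = 0 := by
    ext a' b' a b
    simpa using h a' a'.2 a a.2 b' b'.2 b b.2
  rintro _ ⟨z, rfl⟩
  rw [mem_perp]
  rintro _ ⟨c, rfl⟩
  exact LinearMap.congr_fun₂ hzero z c

lemma perp_tsub_top (S : Submodule K X) :
    perp (tensorPairing ΦX ΦY) (tsub K S ⊤) = tsub K (perp ΦX S) ⊤ := by
  refine (eq_perp_of_le_of_finrank_add_finrank (tsub_le_perp_tsub ΦX ΦY ?_) ?_).symm
  · intro a' ha' a ha _ _ _ _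
    rw [(mem_perp ΦX S a').mp ha' a ha, zero_mul]
  · rw [finrank_tsub, finrank_tsub, finrank_top, finrank_tensorProduct, ← add_mul,
      finrank_perp_add_finrank]

lemma perp_top_tsub (S : Submodule K Y) :
    perp (tensorPairing ΦX ΦY) (tsub K ⊤ S) = tsub K ⊤ (perp ΦY S) := by
  refine (eq_perp_of_le_of_finrank_add_finrank (tsub_le_perp_tsub ΦX ΦY ?_) ?_).symm
  · intro _ _ _ _ b' hb' b hb
    rw [(mem_perp ΦY S b').mp hb' b hb, mul_zero]
  · rw [finrank_tsub, finrank_tsub, finrank_top, finrank_tensorProduct, ← mul_add,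
      finrank_perp_add_finrank]

end TensorProduct

section TensorPower

variable {K : Type*} [Field K] {V : Type*} [AddCommGroup V] [Module K V] [FiniteDimensional K V]
  (Φ : V ≃ₗ[K] Dual K V)

noncomputable def powPairing (q : ℕ) : (⨂[K]^q V) ≃ₗ[K] Dual K (⨂[K]^q V) :=
  (PiTensorProduct.congr fun _ => Φ).trans PiTensorProduct.dualDistribEquiv

@[simp]
lemma powPairing_tprod {q : ℕ} (v w : Fin q → V) :
    powPairing Φ q (PiTensorProduct.tprod K v) (PiTensorProduct.tprod K w) =
      ∏ i, Φ (v i) (w i) := by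
  simp only [powPairing, PiTensorProduct.dualDistribEquiv, LinearEquiv.trans_apply,
    PiTensorProduct.congr_tprod, PiTensorProduct.dualDistribEquivOfBasis_apply_apply,
    PiTensorProduct.piTensorHomMap_tprod_tprod, PiTensorProduct.constantBaseRingEquiv_tprod]
  convert rfl

lemma powPairing_cast {i j : ℕ} (h : i = j) (x y : ⨂[K]^i V) :
    powPairing Φ j (TensorPower.cast K V h x) (TensorPower.cast K V h y) =
      powPairing Φ i x y := by
  subst h
  rw [TensorPower.cast_refl]
  rfl

lemma powPairing_mulEquiv (n m : ℕ) (x y : (⨂[K]^n V) ⊗[K] (⨂[K]^m V)) :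
    powPairing Φ (n + m) (TensorPower.mulEquiv x) (TensorPower.mulEquiv y)
      = tensorPairing (powPairing Φ n) (powPairing Φ m) x y := by
  suffices TensorPower.mulEquiv.dualMap.toLinearMap ∘ₗ (powPairing Φ (n + m)).toLinearMap ∘ₗ
      TensorPower.mulEquiv.toLinearMap =
        (tensorPairing (powPairing Φ n) (powPairing Φ m)).toLinearMap from
    LinearMap.congr_fun₂ this x y
  ext a b c d
  simp [← TensorPower.gMul_def, TensorPower.tprod_mul_tprod, Fin.prod_univ_add]

lemma powPairing_pow2 (z z' : V ⊗[K] V) :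
    powPairing Φ 2 (pow2 K V z) (pow2 K V z') = tensorPairing Φ Φ z z' := by
  suffices (pow2 K V).dualMap.toLinearMap ∘ₗ (powPairing Φ 2).toLinearMap ∘ₗ
      (pow2 K V).toLinearMap = (tensorPairing Φ Φ).toLinearMap from
    LinearMap.congr_fun₂ this z z'
  ext a b c d
  simp only [pow2, pow1, TensorPower.cast_refl, LinearEquiv.trans_refl, LinearEquiv.comp_coe,
    TensorProduct.AlgebraTensorModule.curry_apply, LinearMap.restrictScalars_self,
    TensorProduct.curry_apply, LinearEquiv.coe_coe, LinearEquiv.trans_apply,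
    TensorProduct.congr_tmul, PiTensorProduct.subsingletonEquiv_symm_apply',
    LinearEquiv.dualMap_apply]
  exact (powPairing_mulEquiv Φ 1 1 _ _).trans (by simp)

lemma perp_segAux (a b : ℕ) (L : Submodule K (V ⊗[K] V)) :
    perp (powPairing Φ (a + (2 + b))) (segAux K V a b L) =
      segAux K V a b (perp (tensorPairing Φ Φ) L) := by
  rw [segAux, segAux, perp_map _ _ _ (powPairing_mulEquiv Φ a (2 + b)), perp_top_tsub,
    perp_map _ _ _ (powPairing_mulEquiv Φ 2 b), perp_tsub_top, perp_map _ _ _ (powPairing_pow2 Φ)]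

lemma perp_shiftSub (q : ℕ) (L : Submodule K (V ⊗[K] V)) (j : Fin (q - 1)) :
    perp (powPairing Φ q) (shiftSub K V q L j) =
      shiftSub K V q (perp (tensorPairing Φ Φ) L) j := by
  rw [shiftSub, shiftSub, perp_map _ _ _ (powPairing_cast Φ _), perp_segAux]

lemma perp_idealComp (q : ℕ) (M : Submodule K (V ⊗[K] V)) :
    perp (powPairing Φ q) (idealComp K V q M) = Eint K V q (perp (tensorPairing Φ Φ) M) := by
  simp only [idealComp, Eint, perp_iSup, perp_shiftSub]

theorem quadDim_eq_finrank_Eint (q : ℕ) (M : Submodule K (V ⊗[K] V)) :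
    quadDim K V q M = finrank K (Eint K V q (perp (tensorPairing Φ Φ) M)) := by
  rw [quadDim, finrank_quotient_eq_finrank_perp (powPairing Φ q), perp_idealComp]

end TensorPower

section Coordinates

variable (K : Type*) [Field K] (n : ℕ)

noncomputable def stdPairing : (Fin n → K) ≃ₗ[K] Dual K (Fin n → K) :=
  (Pi.basisFun K (Fin n)).toDualEquiv

variable {K n}

lemma stdPairing_apply (u s : Fin n → K) : stdPairing K n u s = ∑ i, u i * s i := by
  have key : (stdPairing K n).toLinearMap =
      ∑ i, (LinearMap.proj i).smulRight (LinearMap.proj i) := by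
    ext i j
    simpa [stdPairing, Pi.single_apply] using (Pi.basisFun K (Fin n)).toDual_apply i j
  simpa using LinearMap.congr_fun₂ key u s

lemma form2_apply (η x : (Fin n → K) ⊗[K] (Fin n → K)) :
    form2 K n η x = tensorPairing (stdPairing K n) (stdPairing K n) x η := by
  have key : ∑ p : Fin n × Fin n, (coord2 K n p.1 p.2).smulRight (coord2 K n p.1 p.2)
      = (tensorPairing (stdPairing K n) (stdPairing K n)).toLinearMap.flip := by
    refine TensorProduct.ext' fun u v => TensorProduct.ext' fun s t => ?_
    simp only [coord2, Fintype.sum_prod_type, LinearMap.coe_sum, LinearMap.coe_smulRight,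
      Finset.sum_apply, lift.tmul, LinearMap.coe_proj, Function.eval, LinearMap.smul_apply,
      smul_eq_mul, LinearMap.flip_apply, LinearEquiv.coe_coe, tensorPairing_tmul,
      stdPairing_apply, Finset.sum_mul_sum]
    exact Finset.sum_congr rfl fun _ _ => Finset.sum_congr rfl fun _ _ => by ring
  simpa [form2] using LinearMap.congr_fun₂ key η x

lemma perp2_eq_perp (M : Submodule K ((Fin n → K) ⊗[K] (Fin n → K))) :
    perp2 K n M = perp (tensorPairing (stdPairing K n) (stdPairing K n)) M := by
  ext x
  simp [perp2, mem_perp, form2_apply]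

end Coordinates

end GS

theorem quadDim_eq_finrank_Eint_perp_general (K : Type*) [Field K] (n : ℕ)
    (M : Submodule K ((Fin n → K) ⊗[K] (Fin n → K))) (q : ℕ) :
    GS.quadDim K (Fin n → K) q M =
      Module.finrank K (GS.Eint K (Fin n → K) q (GS.perp2 K n M)) := by
  rw [GS.perp2_eq_perp, GS.quadDim_eq_finrank_Eint (GS.stdPairing K n)]

/-- Let `R` be the quadratic `K`-algebra with `n` generators whose space of
relations is the `d`-dimensional subspace `M ⊆ E ⊗ E` (`E = K^n`). Then for every `q ≥ 2`,
`dim R_q = dim E_q(M^⊥, E)`. -/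
theorem quadDim_eq_finrank_Eint_perp (K : Type*) [Field K] (n d : ℕ)
    (M : Submodule K ((Fin n → K) ⊗[K] (Fin n → K))) (hM : Module.finrank K M = d)
    (q : ℕ) (hq2 : 2 ≤ q) :
    GS.quadDim K (Fin n → K) q M =
      Module.finrank K (GS.Eint K (Fin n → K) q (GS.perp2 K n M)) :=
  quadDim_eq_finrank_Eint_perp_general K n M q
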